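/- Let $E\subset\mathbb{R}^d$ and $0<s<d$. Then $\Gamma_s(E) = \inf\{I_s(\mu) : \mu \text{ is a Borel probability measure supported on } E \text{ with } \mu \ll \mathcal{L}\}$ (with $\inf\emptyset = \infty$). -/

import Mathlib

/-!
An absolutely continuous probability measure `μ` carried by `E` has a Lebesgue density `f`
vanishing off `E`. The simple functions `gₙ` increasing to `f` give measures `gₙ 𝓛 ≤ μ` of
masses `aₙ → 1`, and `aₙ⁻¹ gₙ 𝓛 ∈ 𝒫₀(E)`. The energy is monotone in the measure and
quadratic under scaling, so `aₙ² Γ_s(E) ≤ I_s(μ)`, and letting `n → ∞` gives `Γ_s(E) ≤ I_s(μ)`.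
Conversely, every measure of `𝒫₀(E)` is absolutely continuous and carried by `E`.
-/

open MeasureTheory Filter Set
open scoped ENNReal NNReal

/-- The `s`-energy of a measure: `∬ |x-y|^{-s} dμ dμ`. -/
noncomputable def energy {X : Type*} [EMetricSpace X] [MeasurableSpace X] (s : ℝ)
    (μ : Measure X) : ℝ≥0∞ :=
  ∫⁻ x, ∫⁻ y, edist x y ^ (-s) ∂μ ∂μ

/-- `μ ∈ 𝒫₀(E)`: `μ` is a Borel probability measure which is a finite positive
combination of restrictions of Lebesgue measure to Borel subsets of `E`. -/
def IsRegComb {d : ℕ} (E : Set (EuclideanSpace ℝ (Fin d)))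
    (μ : Measure (EuclideanSpace ℝ (Fin d))) : Prop :=
  IsProbabilityMeasure μ ∧
    ∃ (k : ℕ) (c : Fin k → ℝ≥0∞) (F : Fin k → Set (EuclideanSpace ℝ (Fin d))),
      (∀ i, 0 < c i) ∧ (∀ i, MeasurableSet (F i)) ∧ (∀ i, F i ⊆ E) ∧
      μ = ∑ i, c i • volume.restrict (F i)

open Classical in
/-- The minimal regular `s`-energy `Γ_s(E)` of a set `E ⊆ ℝ^d`. -/
noncomputable def minRegEnergy {d : ℕ} (s : ℝ) (E : Set (EuclideanSpace ℝ (Fin d))) : ℝ≥0∞ :=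
  if 0 < volume E then
    ⨅ (μ : Measure (EuclideanSpace ℝ (Fin d))) (_ : IsRegComb E μ), energy s μ
  else ⊤

open scoped Topology

section Energy

variable {X : Type*} [EMetricSpace X] [MeasurableSpace X]

lemma energy_mono (s : ℝ) {μ ν : Measure X} (h : μ ≤ ν) : energy s μ ≤ energy s ν :=
  lintegral_mono' h fun _ => lintegral_mono' h le_rfl

lemma energy_smul_measure (s : ℝ) {c : ℝ≥0∞} (hc : c ≠ ∞) (μ : Measure X) :
    energy s (c • μ) = c ^ 2 * energy s μ := by
  simp only [energy, lintegral_smul_measure, smul_eq_mul]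
  rw [lintegral_const_mul' _ _ hc, sq, mul_assoc]

end Energy

lemma withDensity_simpleFunc_eq_sum {α : Type*} [MeasurableSpace α] (μ : Measure α)
    (g : SimpleFunc α ℝ≥0∞) :
    μ.withDensity g = ∑ v ∈ g.range.filter (· ≠ 0), v • μ.restrict (g ⁻¹' {v}) := by
  ext A hA
  rw [withDensity_apply _ hA, SimpleFunc.lintegral_eq_lintegral g (μ.restrict A),
    Measure.finsetSum_apply, SimpleFunc.lintegral,
    ← Finset.sum_filter_of_ne (p := (· ≠ 0)) fun v _ hv => left_ne_zero_of_mul hv]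
  refine Finset.sum_congr rfl fun v _ => ?_
  rw [Measure.smul_apply, smul_eq_mul, Measure.restrict_apply hA,
    Measure.restrict_apply (g.measurableSet_fiber v), inter_comm]

lemma exists_measurable_density_support_subset {α : Type*} [MeasurableSpace α]
    {μ ν : Measure α} [μ.HaveLebesgueDecomposition ν] (hac : μ ≪ ν) {E : Set α}
    (hE : μ Eᶜ = 0) :
    ∃ f : α → ℝ≥0∞, Measurable f ∧ Function.support f ⊆ E ∧ ν.withDensity f = μ := by
  set F := (toMeasurable μ Eᶜ)ᶜ
  have hFE : F ⊆ E := fun x hx => by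
    by_contra hxE
    exact hx (subset_toMeasurable μ Eᶜ hxE)
  have hμF : μ.restrict F = μ := by
    refine Measure.restrict_eq_self_of_ae_mem (measure_eq_zero_iff_ae_notMem.mp ?_)
    rwa [measure_toMeasurable]
  refine ⟨F.indicator (μ.rnDeriv ν),
    (Measure.measurable_rnDeriv μ ν).indicator (measurableSet_toMeasurable μ Eᶜ).compl,
    Set.support_indicator_subset.trans hFE, ?_⟩
  rw [withDensity_indicator (measurableSet_toMeasurable μ Eᶜ).compl,
    ← restrict_withDensity (measurableSet_toMeasurable μ Eᶜ).compl,
    Measure.withDensity_rnDeriv_eq μ ν hac, hμF]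

section RegComb

variable {d : ℕ}

lemma isRegComb_of_finset_sum {ι : Type*} {E : Set (EuclideanSpace ℝ (Fin d))}
    {μ : Measure (EuclideanSpace ℝ (Fin d))} [IsProbabilityMeasure μ] (T : Finset ι)
    (c : ι → ℝ≥0∞) (F : ι → Set (EuclideanSpace ℝ (Fin d))) (hc : ∀ i ∈ T, 0 < c i)
    (hF : ∀ i ∈ T, MeasurableSet (F i)) (hFE : ∀ i ∈ T, F i ⊆ E)
    (hμ : μ = ∑ i ∈ T, c i • volume.restrict (F i)) : IsRegComb E μ := by
  refine ⟨inferInstance, T.card, fun i => c (T.equivFin.symm i), fun i => F (T.equivFin.symm i),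
    fun i => hc _ (T.equivFin.symm i).2, fun i => hF _ (T.equivFin.symm i).2,
    fun i => hFE _ (T.equivFin.symm i).2, ?_⟩
  rw [hμ, ← Finset.sum_coe_sort T]
  exact (Equiv.sum_comp T.equivFin.symm fun i : T => c i • volume.restrict (F i)).symm

lemma IsRegComb.measure_compl_eq_zero {E : Set (EuclideanSpace ℝ (Fin d))}
    {μ : Measure (EuclideanSpace ℝ (Fin d))} (hμ : IsRegComb E μ) : μ Eᶜ = 0 := by
  obtain ⟨-, k, c, F, -, hF, hFE, rfl⟩ := hμ
  rw [Measure.finsetSum_apply]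
  refine Finset.sum_eq_zero fun i _ => ?_
  rw [Measure.smul_apply, Measure.restrict_apply' (hF i),
    (disjoint_compl_left.mono_right (hFE i)).inter_eq, measure_empty, smul_zero]

lemma IsRegComb.absolutelyContinuous {E : Set (EuclideanSpace ℝ (Fin d))}
    {μ : Measure (EuclideanSpace ℝ (Fin d))} (hμ : IsRegComb E μ) : μ ≪ volume := by
  obtain ⟨-, k, c, F, -, -, -, rfl⟩ := hμ
  intro A hA
  rw [Measure.finsetSum_apply]
  refine Finset.sum_eq_zero fun i _ => ?_
  rw [Measure.smul_apply, Measure.absolutelyContinuous_restrict hA, smul_zero]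

lemma sq_lintegral_mul_iInf_le_energy_withDensity (s : ℝ) {E : Set (EuclideanSpace ℝ (Fin d))}
    (g : SimpleFunc (EuclideanSpace ℝ (Fin d)) ℝ≥0∞) (hgE : Function.support g ⊆ E)
    (hg : ∫⁻ x, g x ≠ ∞) :
    (∫⁻ x, g x) ^ 2 * ⨅ (ν) (_ : IsRegComb E ν), energy s ν ≤
      energy s (volume.withDensity g) := by
  set a := ∫⁻ x, g x
  rcases eq_or_ne a 0 with ha | ha
  · simp [ha]
  set ν := a⁻¹ • volume.withDensity g
  have hν : IsProbabilityMeasure ν := ⟨by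
    rw [Measure.smul_apply, withDensity_apply _ MeasurableSet.univ, setLIntegral_univ,
      smul_eq_mul, ENNReal.inv_mul_cancel ha hg]⟩
  have hνE : IsRegComb E ν := by
    refine isRegComb_of_finset_sum (g.range.filter (· ≠ 0)) (fun v => a⁻¹ * v)
      (fun v => g ⁻¹' {v}) (fun v hv => ?_) (fun v _ => g.measurableSet_fiber v)
      (fun v hv x hx => hgE ?_) ?_
    · exact pos_iff_ne_zero.mpr (mul_ne_zero (ENNReal.inv_ne_zero.mpr hg)
        (Finset.mem_filter.mp hv).2)
    · rw [Function.mem_support, show g x = v from hx]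
      exact (Finset.mem_filter.mp hv).2
    · simp only [ν, withDensity_simpleFunc_eq_sum, Finset.smul_sum, smul_smul]
  calc a ^ 2 * ⨅ (ν) (_ : IsRegComb E ν), energy s ν
      ≤ a ^ 2 * energy s ν := mul_le_mul' le_rfl (iInf₂_le ν hνE)
    _ = (a * a⁻¹) ^ 2 * energy s (volume.withDensity g) := by
      rw [energy_smul_measure s (ENNReal.inv_ne_top.mpr ha), mul_pow, mul_assoc]
    _ = energy s (volume.withDensity g) := by rw [ENNReal.mul_inv_cancel ha hg, one_pow, one_mul]

lemma iInf_isRegComb_le_energy (s : ℝ) {E : Set (EuclideanSpace ℝ (Fin d))}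
    {μ : Measure (EuclideanSpace ℝ (Fin d))} [IsProbabilityMeasure μ] (hE : μ Eᶜ = 0)
    (hac : μ ≪ volume) :
    ⨅ (ν) (_ : IsRegComb E ν), energy s ν ≤ energy s μ := by
  obtain ⟨f, hf, hfE, rfl⟩ := exists_measurable_density_support_subset hac hE
  set g := SimpleFunc.eapprox f
  have hgf : ∀ n x, g n x ≤ f x := fun n x =>
    SimpleFunc.iSup_eapprox_apply hf x ▸ le_iSup (fun m => g m x) n
  have hf1 : ∫⁻ x, f x = 1 := by
    rw [← setLIntegral_univ, ← withDensity_apply _ MeasurableSet.univ, measure_univ]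
  have hmass : Tendsto (fun n => ∫⁻ x, g n x) atTop (𝓝 1) :=
    hf1 ▸ lintegral_tendsto_of_tendsto_of_monotone (fun n => (g n).measurable.aemeasurable)
      (ae_of_all _ fun x _ _ hmn => SimpleFunc.monotone_eapprox f hmn x)
      (ae_of_all _ (SimpleFunc.tendsto_eapprox hf))
  have hbound : ∀ n, (∫⁻ x, g n x) ^ 2 * ⨅ (ν) (_ : IsRegComb E ν), energy s ν ≤
      energy s (volume.withDensity f) := by
    intro n
    have hgE : Function.support (g n) ⊆ E := fun x hx =>
      hfE fun h0 => hx (le_antisymm (h0 ▸ hgf n x) zero_le)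
    have hfin : ∫⁻ x, g n x ≠ ∞ :=
      ne_top_of_le_ne_top ENNReal.one_ne_top (hf1 ▸ lintegral_mono (hgf n))
    exact (sq_lintegral_mul_iInf_le_energy_withDensity s (g n) hgE hfin).trans
      (energy_mono s (withDensity_mono (ae_of_all _ (hgf n))))
  have hlim : Tendsto (fun n => (∫⁻ x, g n x) ^ 2 * ⨅ (ν) (_ : IsRegComb E ν), energy s ν)
      atTop (𝓝 (⨅ (ν) (_ : IsRegComb E ν), energy s ν)) := by
    simpa using ENNReal.Tendsto.mul_const (((ENNReal.continuous_pow 2).tendsto 1).comp hmass)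
      (Or.inl (pow_ne_zero 2 one_ne_zero))
  exact le_of_tendsto' hlim hbound

end RegComb

lemma ne_zero_of_absolutelyContinuous_of_measure_compl_eq_zero {α : Type*}
    [MeasurableSpace α] {μ ν : Measure α} [NeZero μ] (hac : μ ≪ ν) {E : Set α}
    (hE : μ Eᶜ = 0) : ν E ≠ 0 := fun hνE =>
  NeZero.ne μ (Measure.measure_univ_eq_zero.mp
    (union_compl_self E ▸ measure_union_null (hac hνE) hE))

theorem stmt11_general (d : ℕ) (s : ℝ) (E : Set (EuclideanSpace ℝ (Fin d))) :
    minRegEnergy s E =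
      ⨅ (μ : Measure (EuclideanSpace ℝ (Fin d)))
        (_ : IsProbabilityMeasure μ ∧ μ Eᶜ = 0 ∧ μ ≪ volume), energy s μ := by
  rw [minRegEnergy]
  split_ifs with hE
  · refine le_antisymm (le_iInf₂ fun μ ⟨_, hμE, hac⟩ => iInf_isRegComb_le_energy s hμE hac)
      (le_iInf₂ fun ν hν => iInf₂_le ν
        ⟨hν.1, hν.measure_compl_eq_zero, hν.absolutelyContinuous⟩)
  · refine (iInf₂_eq_top.mpr fun μ ⟨_, hμE, hac⟩ => ?_).symm
    exact absurd (pos_iff_ne_zero.mpr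
      (ne_zero_of_absolutelyContinuous_of_measure_compl_eq_zero hac hμE)) hE

/-- `Γ_s(E)` equals the infimum of `s`-energies over all Borel probability measures
supported on `E` which are absolutely continuous with respect to Lebesgue measure. -/
theorem stmt11 (d : ℕ) (s : ℝ) (hs : 0 < s) (hsd : s < d)
    (E : Set (EuclideanSpace ℝ (Fin d))) :
    minRegEnergy s E =
      ⨅ (μ : Measure (EuclideanSpace ℝ (Fin d)))
        (_ : IsProbabilityMeasure μ ∧ μ Eᶜ = 0 ∧ μ ≪ volume), energy s μ :=
  stmt11_general d s E
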